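/- Let φ : (S,g₁) → (S,g₂) be an orientation-preserving harmonic diffeomorphism between Riemannian surfaces and ĝ = σ²(u)|u_z|²|dz|² the associated conformal metric. Then the Gauss curvature of ĝ satisfies K_ĝ = K_{g₂}(φ) · Ĵ(φ), where Ĵ(φ) = (|u_z|² - |u_{z̄}|²)/|u_z|² is the Jacobian of φ : (S,ĝ) → (S,g₂). In particular 0 ≤ Ĵ(φ) ≤ 1 and ∫_A K_ĝ⁻ dσ_ĝ = ∫_{φ(A)} K_{g₂}⁻ dσ_{g₂} for any measurable A ⊂ S. -/

import Mathlib

open Filter Topology MeasureTheory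

/-- Wirtinger derivative `∂/∂z`. -/
noncomputable def wz (f : ℂ → ℂ) (z : ℂ) : ℂ :=
  (fderiv ℝ f z 1 - Complex.I * fderiv ℝ f z Complex.I) / 2

/-- Wirtinger derivative `∂/∂z̄`. -/
noncomputable def wzb (f : ℂ → ℂ) (z : ℂ) : ℂ :=
  (fderiv ℝ f z 1 + Complex.I * fderiv ℝ f z Complex.I) / 2

/-- The flat Laplacian of a real-valued function on `ℂ`. -/
noncomputable def lap (f : ℂ → ℝ) (z : ℂ) : ℝ :=
  fderiv ℝ (fun w => fderiv ℝ f w 1) z 1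
    + fderiv ℝ (fun w => fderiv ℝ f w Complex.I) z Complex.I

/-- Curvature of the conformal metric `ρ |dz|²`: `K = -(1/(2ρ)) Δ log ρ`. -/
noncomputable def confCurv (ρ : ℂ → ℝ) (z : ℂ) : ℝ :=
  -(1 / (2 * ρ z)) * lap (fun w => Real.log (ρ w)) z

section WirtingerLib
open Complex Filter Topology

lemma lin_eq (L : ℂ →L[ℝ] ℂ) (h : ℂ) :
    L h = (L 1 - I * L I)/2 * h + (L 1 + I * L I)/2 * (starRingEnd ℂ h) := by
  have h1 : L h = h.re • L 1 + h.im • L I := by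
    conv_lhs => rw [show h = h.re • (1:ℂ) + h.im • I by
      simp [Complex.real_smul, Complex.re_add_im]]
    rw [L.map_add, L.map_smul, L.map_smul]
  have hc : (starRingEnd ℂ) h = (h.re:ℂ) - (h.im:ℂ) * I := by
    simp [Complex.ext_iff]
  have hh : h = (h.re:ℂ) + (h.im:ℂ) * I := (Complex.re_add_im h).symm
  rw [h1, hc, Complex.real_smul, Complex.real_smul]
  linear_combination (-(L 1 - I * L I)/2) * hh + ((h.im:ℂ) * L I) * Complex.I_mul_I

lemma fderiv_wirt {f : ℂ → ℂ} {z : ℂ} (v : ℂ) :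
    fderiv ℝ f z v = wz f z * v + wzb f z * (starRingEnd ℂ) v := lin_eq _ v

lemma wz_congr {f g : ℂ → ℂ} {z : ℂ} (h : f =ᶠ[𝓝 z] g) : wz f z = wz g z := by
  unfold wz; rw [h.fderiv_eq]

lemma wzb_congr {f g : ℂ → ℂ} {z : ℂ} (h : f =ᶠ[𝓝 z] g) : wzb f z = wzb g z := by
  unfold wzb; rw [h.fderiv_eq]

lemma wz_mul {f g : ℂ → ℂ} {z : ℂ} (hf : DifferentiableAt ℝ f z)
    (hg : DifferentiableAt ℝ g z) :
    wz (fun w => f w * g w) z = f z * wz g z + g z * wz f z := by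
  unfold wz; rw [fderiv_fun_mul hf hg]
  simp only [ContinuousLinearMap.add_apply, ContinuousLinearMap.smul_apply, smul_eq_mul]
  try ring

lemma wzb_mul {f g : ℂ → ℂ} {z : ℂ} (hf : DifferentiableAt ℝ f z)
    (hg : DifferentiableAt ℝ g z) :
    wzb (fun w => f w * g w) z = f z * wzb g z + g z * wzb f z := by
  unfold wzb; rw [fderiv_fun_mul hf hg]
  simp only [ContinuousLinearMap.add_apply, ContinuousLinearMap.smul_apply, smul_eq_mul]
  try ring

lemma fderiv_conj_apply {f : ℂ → ℂ} {z : ℂ} (hf : DifferentiableAt ℝ f z) (v : ℂ) :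
    fderiv ℝ (fun w => (starRingEnd ℂ) (f w)) z v = (starRingEnd ℂ) (fderiv ℝ f z v) := by
  have h1 : (fun w => (starRingEnd ℂ) (f w)) = (⇑Complex.conjCLE) ∘ f := rfl
  rw [h1, fderiv_comp z Complex.conjCLE.differentiableAt hf,
    Complex.conjCLE.fderiv]
  simp

lemma wz_conj {f : ℂ → ℂ} {z : ℂ} (hf : DifferentiableAt ℝ f z) :
    wz (fun w => (starRingEnd ℂ) (f w)) z = (starRingEnd ℂ) (wzb f z) := by
  unfold wz wzb
  rw [fderiv_conj_apply hf, fderiv_conj_apply hf]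
  simp [map_div₀, map_ofNat]
  try ring

lemma wzb_conj {f : ℂ → ℂ} {z : ℂ} (hf : DifferentiableAt ℝ f z) :
    wzb (fun w => (starRingEnd ℂ) (f w)) z = (starRingEnd ℂ) (wz f z) := by
  unfold wz wzb
  rw [fderiv_conj_apply hf, fderiv_conj_apply hf]
  simp [map_div₀, map_ofNat]
  try ring

lemma wz_comp {f g : ℂ → ℂ} {z : ℂ} (hf : DifferentiableAt ℝ f (g z))
    (hg : DifferentiableAt ℝ g z) :
    wz (fun w => f (g w)) z
      = wz f (g z) * wz g z + wzb f (g z) * (starRingEnd ℂ) (wzb g z) := by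
  have h1 : (fun w => f (g w)) = f ∘ g := rfl
  have h2 : ∀ v, fderiv ℝ (f ∘ g) z v = fderiv ℝ f (g z) (fderiv ℝ g z v) := by
    intro v; rw [fderiv_comp z hf hg]; rfl
  unfold wz wzb
  rw [h1, h2, h2, lin_eq (fderiv ℝ f (g z)) (fderiv ℝ g z 1),
    lin_eq (fderiv ℝ f (g z)) (fderiv ℝ g z Complex.I)]
  simp [map_div₀, map_ofNat]
  try ring

lemma wzb_comp {f g : ℂ → ℂ} {z : ℂ} (hf : DifferentiableAt ℝ f (g z))
    (hg : DifferentiableAt ℝ g z) :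
    wzb (fun w => f (g w)) z
      = wz f (g z) * wzb g z + wzb f (g z) * (starRingEnd ℂ) (wz g z) := by
  have h1 : (fun w => f (g w)) = f ∘ g := rfl
  have h2 : ∀ v, fderiv ℝ (f ∘ g) z v = fderiv ℝ f (g z) (fderiv ℝ g z v) := by
    intro v; rw [fderiv_comp z hf hg]; rfl
  unfold wz wzb
  rw [h1, h2, h2, lin_eq (fderiv ℝ f (g z)) (fderiv ℝ g z 1),
    lin_eq (fderiv ℝ f (g z)) (fderiv ℝ g z Complex.I)]
  simp [map_div₀, map_ofNat]
  try ring

lemma fderiv_ofReal_apply {f : ℂ → ℝ} {z : ℂ} (hf : DifferentiableAt ℝ f z) (v : ℂ) :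
    fderiv ℝ (fun w => (f w : ℂ)) z v = ((fderiv ℝ f z v : ℝ) : ℂ) := by
  have h1 : (fun w => (f w : ℂ)) = (⇑Complex.ofRealCLM) ∘ f := rfl
  rw [h1, fderiv_comp z Complex.ofRealCLM.differentiableAt hf,
    Complex.ofRealCLM.fderiv]
  simp

lemma wzb_ofReal {f : ℂ → ℝ} {z : ℂ} (hf : DifferentiableAt ℝ f z) :
    wzb (fun w => (f w : ℂ)) z = (starRingEnd ℂ) (wz (fun w => (f w : ℂ)) z) := by
  unfold wz wzb
  rw [fderiv_ofReal_apply hf, fderiv_ofReal_apply hf]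
  simp [map_div₀, map_ofNat, Complex.conj_ofReal]

-- holomorphic functions
lemma wz_of_hasDerivAt {f : ℂ → ℂ} {f' z : ℂ} (h : HasDerivAt f f' z) :
    wz f z = f' ∧ wzb f z = 0 := by
  have hd : fderiv ℝ f z
      = (ContinuousLinearMap.smulRight (1 : ℂ →L[ℂ] ℂ) f').restrictScalars ℝ :=
    (h.hasFDerivAt.restrictScalars ℝ).fderiv
  unfold wz wzb
  rw [hd]
  simp [ContinuousLinearMap.smulRight_apply, smul_eq_mul]
  constructor <;> ring_nf <;> simp [Complex.I_sq] <;> ring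

lemma diff_inv {g : ℂ → ℂ} {z : ℂ} (hg : DifferentiableAt ℝ g z) (h0 : g z ≠ 0) :
    DifferentiableAt ℝ (fun w => (g w)⁻¹) z := by
  have h1 : DifferentiableAt ℂ (fun x : ℂ => x⁻¹) (g z) := differentiableAt_inv h0
  exact (h1.restrictScalars ℝ).comp z hg

lemma wz_inv {g : ℂ → ℂ} {z : ℂ} (hg : DifferentiableAt ℝ g z) (h0 : g z ≠ 0) :
    wz (fun w => (g w)⁻¹) z = -wz g z / (g z)^2 := by
  have h1 : HasDerivAt (fun x : ℂ => x⁻¹) (-((g z)^2)⁻¹) (g z) := hasDerivAt_inv h0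
  obtain ⟨e1, e2⟩ := wz_of_hasDerivAt h1
  have h2 : DifferentiableAt ℂ (fun x : ℂ => x⁻¹) (g z) := differentiableAt_inv h0
  rw [wz_comp (h2.restrictScalars ℝ) hg, e1, e2]
  field_simp
  ring

lemma wz_log {ρ : ℂ → ℝ} {z : ℂ} (hρ : DifferentiableAt ℝ ρ z) (h0 : ρ z ≠ 0) :
    wz (fun w => ((Real.log (ρ w) : ℝ) : ℂ)) z
      = wz (fun w => ((ρ w : ℝ) : ℂ)) z / (ρ z : ℂ) := by
  have hl : DifferentiableAt ℝ (fun w => Real.log (ρ w)) z := hρ.log h0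
  have hfd : ∀ v, fderiv ℝ (fun w => Real.log (ρ w)) z v = (ρ z)⁻¹ * fderiv ℝ ρ z v := by
    intro v
    rw [(hρ.hasFDerivAt.log h0).fderiv]
    simp [smul_eq_mul]
  unfold wz
  rw [fderiv_ofReal_apply hl, fderiv_ofReal_apply hl, hfd, hfd,
    fderiv_ofReal_apply hρ, fderiv_ofReal_apply hρ]
  push_cast
  field_simp

lemma wzb_log {ρ : ℂ → ℝ} {z : ℂ} (hρ : DifferentiableAt ℝ ρ z) (h0 : ρ z ≠ 0) :
    wzb (fun w => ((Real.log (ρ w) : ℝ) : ℂ)) z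
      = wzb (fun w => ((ρ w : ℝ) : ℂ)) z / (ρ z : ℂ) := by
  have hl : DifferentiableAt ℝ (fun w => Real.log (ρ w)) z := hρ.log h0
  have hfd : ∀ v, fderiv ℝ (fun w => Real.log (ρ w)) z v = (ρ z)⁻¹ * fderiv ℝ ρ z v := by
    intro v
    rw [(hρ.hasFDerivAt.log h0).fderiv]
    simp [smul_eq_mul]
  unfold wzb
  rw [fderiv_ofReal_apply hl, fderiv_ofReal_apply hl, hfd, hfd,
    fderiv_ofReal_apply hρ, fderiv_ofReal_apply hρ]
  push_cast
  field_simp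

section snd
variable {F : Type*} [NormedAddCommGroup F] [NormedSpace ℝ F]

lemma fderiv_fderiv_apply {f : ℂ → F} {z : ℂ}
    (hd : DifferentiableAt ℝ (fderiv ℝ f) z) (a b : ℂ) :
    fderiv ℝ (fun w => fderiv ℝ f w a) z b = fderiv ℝ (fderiv ℝ f) z b a := by
  have h1 : (fun w => fderiv ℝ f w a) = fun w => (fderiv ℝ f w) a := rfl
  rw [h1, fderiv_clm_apply hd (differentiableAt_const a)]
  simp

end snd

lemma diffAt_fderiv_apply {f : ℂ → ℂ} {z : ℂ}
    (hd : DifferentiableAt ℝ (fderiv ℝ f) z) (a : ℂ) :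
    DifferentiableAt ℝ (fun w => fderiv ℝ f w a) z := by
  have h2 : DifferentiableAt ℝ (fun w => (fderiv ℝ f w) a) z := hd.clm_apply (differentiableAt_const a)
  exact h2

lemma fderiv_wz_apply {f : ℂ → ℂ} {z : ℂ}
    (hd : DifferentiableAt ℝ (fderiv ℝ f) z) (v : ℂ) :
    fderiv ℝ (wz f) z v
      = (fderiv ℝ (fderiv ℝ f) z v 1 - Complex.I * (fderiv ℝ (fderiv ℝ f) z v Complex.I))/2 := by
  have hA : DifferentiableAt ℝ (fun w => fderiv ℝ f w (1:ℂ)) z := diffAt_fderiv_apply hd 1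
  have hB : DifferentiableAt ℝ (fun w => fderiv ℝ f w Complex.I) z := diffAt_fderiv_apply hd Complex.I
  have h1 : wz f = fun w => (fderiv ℝ f w 1 - Complex.I * fderiv ℝ f w Complex.I) * (2:ℂ)⁻¹ := by
    funext w; simp [wz, div_eq_mul_inv]
  rw [h1, fderiv_mul_const (hA.fun_sub (hB.const_mul Complex.I)) ((2:ℂ)⁻¹),
    fderiv_fun_sub hA (hB.const_mul Complex.I), fderiv_const_mul hB Complex.I]
  simp only [ContinuousLinearMap.smul_apply, ContinuousLinearMap.sub_apply, smul_eq_mul]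
  rw [fderiv_fderiv_apply hd, fderiv_fderiv_apply hd]
  field_simp

lemma fderiv_wzb_apply {f : ℂ → ℂ} {z : ℂ}
    (hd : DifferentiableAt ℝ (fderiv ℝ f) z) (v : ℂ) :
    fderiv ℝ (wzb f) z v
      = (fderiv ℝ (fderiv ℝ f) z v 1 + Complex.I * (fderiv ℝ (fderiv ℝ f) z v Complex.I))/2 := by
  have hA : DifferentiableAt ℝ (fun w => fderiv ℝ f w (1:ℂ)) z := diffAt_fderiv_apply hd 1
  have hB : DifferentiableAt ℝ (fun w => fderiv ℝ f w Complex.I) z := diffAt_fderiv_apply hd Complex.I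
  have h1 : wzb f = fun w => (fderiv ℝ f w 1 + Complex.I * fderiv ℝ f w Complex.I) * (2:ℂ)⁻¹ := by
    funext w; simp [wzb, div_eq_mul_inv]
  rw [h1, fderiv_mul_const (hA.fun_add (hB.const_mul Complex.I)) ((2:ℂ)⁻¹),
    fderiv_fun_add hA (hB.const_mul Complex.I), fderiv_const_mul hB Complex.I]
  simp only [ContinuousLinearMap.smul_apply, ContinuousLinearMap.add_apply, smul_eq_mul]
  rw [fderiv_fderiv_apply hd, fderiv_fderiv_apply hd]
  field_simp

lemma wzb_wz_comm {f : ℂ → ℂ} {z : ℂ} (hf : ContDiffAt ℝ 2 f z) :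
    wzb (wz f) z = wz (wzb f) z := by
  have hd : DifferentiableAt ℝ (fderiv ℝ f) z :=
    (hf.fderiv_right (m := 1) (by norm_num)).differentiableAt (by norm_num)
  have hsym := hf.isSymmSndFDerivAt (by norm_num)
  show (fderiv ℝ (wz f) z 1 + Complex.I * fderiv ℝ (wz f) z Complex.I)/2
      = (fderiv ℝ (wzb f) z 1 - Complex.I * fderiv ℝ (wzb f) z Complex.I)/2
  rw [fderiv_wz_apply hd, fderiv_wz_apply hd, fderiv_wzb_apply hd, fderiv_wzb_apply hd]
  rw [hsym 1 Complex.I]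
  ring

lemma lap_eq {f : ℂ → ℝ} {z : ℂ} (hf : ContDiffAt ℝ 2 f z) :
    lap f z = 4 * (wzb (wz (fun w => ((f w : ℝ) : ℂ))) z).re := by
  have hd : DifferentiableAt ℝ (fderiv ℝ f) z :=
    (hf.fderiv_right (m := 1) (by norm_num)).differentiableAt (by norm_num)
  have hA : DifferentiableAt ℝ (fun w => fderiv ℝ f w (1:ℂ)) z :=
    hd.clm_apply (differentiableAt_const _)
  have hB : DifferentiableAt ℝ (fun w => fderiv ℝ f w Complex.I) z :=
    hd.clm_apply (differentiableAt_const _)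
  -- eventual formula for wz of the complexification
  have hev : wz (fun w => ((f w : ℝ) : ℂ))
      =ᶠ[𝓝 z] fun w => (((fderiv ℝ f w 1 : ℝ) : ℂ)
        - Complex.I * ((fderiv ℝ f w Complex.I : ℝ) : ℂ)) * (2:ℂ)⁻¹ := by
    have h2 : ∀ᶠ w in 𝓝 z, DifferentiableAt ℝ f w := by
      have := hf.eventually (by simp)
      filter_upwards [this] with w hw
      exact hw.differentiableAt (by norm_num)
    filter_upwards [h2] with w hw
    simp only [wz, fderiv_ofReal_apply hw]
    field_simp
  have hAc : DifferentiableAt ℝ (fun w => ((fderiv ℝ f w (1:ℂ) : ℝ) : ℂ)) z :=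
    Complex.ofRealCLM.differentiableAt.comp z hA
  have hBc : DifferentiableAt ℝ (fun w => ((fderiv ℝ f w Complex.I : ℝ) : ℂ)) z :=
    Complex.ofRealCLM.differentiableAt.comp z hB
  have hfd : ∀ v, fderiv ℝ (fun w => (((fderiv ℝ f w 1 : ℝ) : ℂ)
        - Complex.I * ((fderiv ℝ f w Complex.I : ℝ) : ℂ)) * (2:ℂ)⁻¹) z v
      = (((fderiv ℝ (fun w => fderiv ℝ f w (1:ℂ)) z v : ℝ) : ℂ)
        - Complex.I * ((fderiv ℝ (fun w => fderiv ℝ f w Complex.I) z v : ℝ) : ℂ)) * (2:ℂ)⁻¹ := by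
    intro v
    rw [fderiv_mul_const (hAc.fun_sub (hBc.const_mul Complex.I)) ((2:ℂ)⁻¹),
      fderiv_fun_sub hAc (hBc.const_mul Complex.I), fderiv_const_mul hBc Complex.I]
    simp only [ContinuousLinearMap.smul_apply, ContinuousLinearMap.sub_apply, smul_eq_mul]
    rw [fderiv_ofReal_apply hA, fderiv_ofReal_apply hB]
    ring
  rw [wzb_congr hev]
  unfold wzb
  rw [hfd, hfd]
  unfold lap
  set G11 := fderiv ℝ (fun w => fderiv ℝ f w (1:ℂ)) z 1
  set G1I := fderiv ℝ (fun w => fderiv ℝ f w (1:ℂ)) z Complex.I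
  set G21 := fderiv ℝ (fun w => fderiv ℝ f w Complex.I) z 1
  set G2I := fderiv ℝ (fun w => fderiv ℝ f w Complex.I) z Complex.I
  simp [Complex.div_re, Complex.normSq]
  ring

lemma contDiffOn_wz {f : ℂ → ℂ} {U : Set ℂ} (hU : IsOpen U) {n : ℕ}
    (hf : ContDiffOn ℝ (n+1 : ℕ) f U) : ContDiffOn ℝ n (wz f) U := by
  have hD : ContDiffOn ℝ n (fderiv ℝ f) U := by
    apply hf.fderiv_of_isOpen hU
    norm_cast
  have h1 : ContDiffOn ℝ n (fun z => fderiv ℝ f z (1:ℂ)) U :=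
    hD.clm_apply contDiffOn_const
  have h2 : ContDiffOn ℝ n (fun z => fderiv ℝ f z Complex.I) U :=
    hD.clm_apply contDiffOn_const
  exact (h1.sub (h2.const_smul Complex.I)).div_const 2

lemma contDiffOn_wzb {f : ℂ → ℂ} {U : Set ℂ} (hU : IsOpen U) {n : ℕ}
    (hf : ContDiffOn ℝ (n+1 : ℕ) f U) : ContDiffOn ℝ n (wzb f) U := by
  have hD : ContDiffOn ℝ n (fderiv ℝ f) U := by
    apply hf.fderiv_of_isOpen hU
    norm_cast
  have h1 : ContDiffOn ℝ n (fun z => fderiv ℝ f z (1:ℂ)) U :=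
    hD.clm_apply contDiffOn_const
  have h2 : ContDiffOn ℝ n (fun z => fderiv ℝ f z Complex.I) U :=
    hD.clm_apply contDiffOn_const
  exact (h1.add (h2.const_smul Complex.I)).div_const 2

lemma clm_det (L : ℂ →L[ℝ] ℂ) :
    L.det = (L 1).re * (L Complex.I).im - (L Complex.I).re * (L 1).im := by
  have h : L.det = LinearMap.det (L : ℂ →ₗ[ℝ] ℂ) := rfl
  rw [h, ← LinearMap.det_toMatrix Complex.basisOneI, Matrix.det_fin_two]
  simp [LinearMap.toMatrix_apply, Complex.coe_basisOneI_repr, Complex.coe_basisOneI]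

lemma det_fderiv_eq (f : ℂ → ℂ) (z : ℂ) :
    (fderiv ℝ f z).det = ‖wz f z‖^2 - ‖wzb f z‖^2 := by
  rw [clm_det, fderiv_wirt (f := f) 1, fderiv_wirt (f := f) Complex.I]
  simp [Complex.sq_norm, Complex.normSq_apply, Complex.add_re, Complex.add_im,
    Complex.mul_re, Complex.mul_im]
  ring

lemma wz_add {f g : ℂ → ℂ} {z : ℂ} (hf : DifferentiableAt ℝ f z)
    (hg : DifferentiableAt ℝ g z) :
    wz (fun w => f w + g w) z = wz f z + wz g z := by
  unfold wz; rw [fderiv_fun_add hf hg]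
  simp only [ContinuousLinearMap.add_apply]; ring

lemma wz_const_mul {g : ℂ → ℂ} {z : ℂ} (c : ℂ) (hg : DifferentiableAt ℝ g z) :
    wz (fun w => c * g w) z = c * wz g z := by
  unfold wz; rw [fderiv_const_mul hg c]
  simp only [ContinuousLinearMap.smul_apply, smul_eq_mul]; ring

lemma wzb_const_mul {g : ℂ → ℂ} {z : ℂ} (c : ℂ) (hg : DifferentiableAt ℝ g z) :
    wzb (fun w => c * g w) z = c * wzb g z := by
  unfold wzb; rw [fderiv_const_mul hg c]
  simp only [ContinuousLinearMap.smul_apply, smul_eq_mul]; ring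

-- curvature of the target metric σ² in Wirtinger form
lemma K2_eq (σ : ℂ → ℝ) (hσ : ∀ w, 0 < σ w) (hσsm : ContDiff ℝ 3 σ) (w : ℂ) :
    confCurv (fun w' => σ w' ^ 2) w
      = -4 * ((wzb (fun w' => wz (fun x => ((σ x : ℝ) : ℂ)) w' * (((σ w')⁻¹ : ℝ) : ℂ)) w).re)
          / σ w ^ 2 := by
  set F : ℂ → ℂ := fun x => ((σ x : ℝ) : ℂ) with hF
  set μ : ℂ → ℂ := fun w' => wz F w' * (((σ w')⁻¹ : ℝ) : ℂ) with hμdef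
  have hσ0 : ∀ x, σ x ≠ 0 := fun x => (hσ x).ne'
  have hFsm : ∀ n : ℕ, n ≤ 3 → ContDiff ℝ n F := fun n hn =>
    Complex.ofRealCLM.contDiff.comp (hσsm.of_le (by exact_mod_cast hn))
  have hwzF : ∀ n : ℕ, n ≤ 2 → ContDiff ℝ n (wz F) := by
    intro n hn
    rw [← contDiffOn_univ]
    exact contDiffOn_wz isOpen_univ ((hFsm (n+1) (by omega)).contDiffOn)
  have hinv : ContDiff ℝ 2 (fun w' => (((σ w')⁻¹ : ℝ) : ℂ)) :=
    Complex.ofRealCLM.contDiff.comp ((hσsm.of_le (by norm_num)).inv hσ0)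
  have hμsm : ContDiff ℝ 2 μ := (hwzF 2 le_rfl).mul hinv
  -- the log-derivative identity : wz (log σ²) = 2 μ
  have hlog : (fun x => ((Real.log (σ x ^ 2) : ℝ) : ℂ)) = fun x => ((Real.log (σ x ^ 2) : ℝ) : ℂ) := rfl
  have hσsq : ContDiff ℝ 3 (fun x => σ x ^ 2) := hσsm.pow 2
  have hσsq0 : ∀ x, σ x ^ 2 ≠ 0 := fun x => pow_ne_zero _ (hσ0 x)
  have hP : (fun x => ((σ x ^ 2 : ℝ) : ℂ)) = fun x => F x * F x := by
    funext x; push_cast; ring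
  have hwzL : ∀ x, wz (fun x' => ((Real.log (σ x' ^ 2) : ℝ) : ℂ)) x = 2 * μ x := by
    intro x
    rw [wz_log ((hσsq.differentiable (by norm_num)).differentiableAt) (hσsq0 x), hP,
      wz_mul ((hFsm 1 (by norm_num)).differentiable (by norm_num)).differentiableAt
        ((hFsm 1 (by norm_num)).differentiable (by norm_num)).differentiableAt]
    have : (((σ x)⁻¹ : ℝ) : ℂ) = (F x)⁻¹ := by push_cast [hF]; rfl
    rw [hμdef]
    simp only [this]
    have hFx : F x ≠ 0 := by simp [hF, Complex.ofReal_ne_zero, hσ0 x]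
    push_cast
    field_simp
    simp only [hF]
    have hσx : ((σ x : ℝ) : ℂ) ≠ 0 := by exact_mod_cast hσ0 x
    field_simp
    ring
  -- Laplacian
  have hlogC2 : ContDiffAt ℝ 2 (fun x => Real.log (σ x ^ 2)) w := by
    exact ((hσsq.of_le (by norm_num)).contDiffAt).log (hσsq0 w)
  have hlap := lap_eq hlogC2
  have hwzLfun : wz (fun x' => ((Real.log (σ x' ^ 2) : ℝ) : ℂ)) = fun x => 2 * μ x :=
    funext hwzL
  unfold confCurv
  rw [hlap, hwzLfun,
    wzb_const_mul 2 ((hμsm.differentiable (by norm_num)).differentiableAt)]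
  have h2 : σ w ^ 2 > 0 := pow_pos (hσ w) 2
  simp [Complex.mul_re]
  field_simp

section Main
variable {Ω : Set ℂ} {u : ℂ → ℂ} {σ : ℂ → ℝ}

lemma harm_eq (hσ : ∀ w, 0 < σ w)
    (hharm : ∀ z ∈ Ω,
      wzb (fun w => wz u w) z
        + 2 * (wz (fun w => (σ w : ℂ)) (u z) / (σ (u z))) * wz u z * wzb u z = 0)
    {w : ℂ} (hw : w ∈ Ω) :
    wzb (wz u) w = -2 * ((wz (fun x => ((σ x : ℝ) : ℂ)) (u w) * (((σ (u w))⁻¹ : ℝ) : ℂ))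
      * (wz u w * wzb u w)) := by
  have h := hharm w hw
  have h2 : ((σ (u w) : ℝ) : ℂ) ≠ 0 := Complex.ofReal_ne_zero.mpr (hσ (u w)).ne'
  rw [div_eq_mul_inv, ← Complex.ofReal_inv] at h
  linear_combination h

lemma wzbL_eq (hΩ : IsOpen Ω) (hσ : ∀ w, 0 < σ w)
    (hσsm : ContDiff ℝ (⊤ : ℕ∞) σ) (hdiff : ContDiffOn ℝ (⊤ : ℕ∞) u Ω)
    (horient : ∀ z ∈ Ω, ‖wzb u z‖ < ‖wz u z‖)
    (hharm : ∀ z ∈ Ω,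
      wzb (fun w => wz u w) z
        + 2 * (wz (fun w => (σ w : ℂ)) (u z) / (σ (u z))) * wz u z * wzb u z = 0)
    {z : ℂ} (hz : z ∈ Ω) :
    wzb (fun w => ((Real.log (σ (u w)^2 * (‖wz u w‖)^2) : ℝ) : ℂ)) z
      = 2 * ((starRingEnd ℂ) (wz (fun x => ((σ x : ℝ) : ℂ)) (u z) * (((σ (u z))⁻¹ : ℝ) : ℂ))
            * (starRingEnd ℂ) (wz u z))
        + (starRingEnd ℂ) (wz (wz u) z) * ((starRingEnd ℂ) (wz u z))⁻¹ := by
  have hΩn : Ω ∈ 𝓝 z := hΩ.mem_nhds hz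
  -- nonvanishing
  have hA : wz u z ≠ 0 := by
    intro h0
    have := horient z hz
    rw [h0] at this
    simp only [norm_zero] at this
    exact (norm_nonneg _).not_gt this
  have hcA : (starRingEnd ℂ) (wz u z) ≠ 0 := by simpa using hA
  have hσz : ((σ (u z) : ℝ) : ℂ) ≠ 0 := Complex.ofReal_ne_zero.mpr (hσ (u z)).ne'
  -- differentiability suite
  have hu2 : ContDiffOn ℝ (2:ℕ) u Ω := hdiff.of_le (by exact WithTop.coe_le_coe.mpr le_top)
  have haS : ContDiffOn ℝ (1:ℕ) (wz u) Ω := contDiffOn_wz hΩ hu2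
  have hbS : ContDiffOn ℝ (1:ℕ) (wzb u) Ω := contDiffOn_wzb hΩ hu2
  have du : DifferentiableAt ℝ u z :=
    ((hdiff.of_le (by simp) : ContDiffOn ℝ (1:ℕ) u Ω).contDiffAt hΩn).differentiableAt (by norm_num)
  have da : DifferentiableAt ℝ (wz u) z := (haS.contDiffAt hΩn).differentiableAt (by norm_num)
  have db : DifferentiableAt ℝ (wzb u) z := (hbS.contDiffAt hΩn).differentiableAt (by norm_num)
  have dσ : DifferentiableAt ℝ σ (u z) := (hσsm.differentiable (by simp)).differentiableAt
  have dF : DifferentiableAt ℝ (fun x => ((σ x : ℝ) : ℂ)) (u z) :=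
    Complex.ofRealCLM.differentiableAt.comp _ dσ
  have dFu : DifferentiableAt ℝ (fun w => ((σ (u w) : ℝ) : ℂ)) z := dF.comp z du
  have dconj : ∀ {h : ℂ → ℂ} {x : ℂ}, DifferentiableAt ℝ h x →
      DifferentiableAt ℝ (fun y => (starRingEnd ℂ) (h y)) x := fun hh =>
    Complex.conjCLE.differentiableAt.comp _ hh
  -- the conformal factor
  set ρr : ℂ → ℝ := fun w => σ (u w)^2 * (‖wz u w‖)^2 with hρr
  have hρpos : 0 < ρr z := by
    have h1 : 0 < ‖wz u z‖ := by
      simpa [norm_pos_iff] using hA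
    exact mul_pos (pow_pos (hσ (u z)) 2) (pow_pos h1 2)
  have hρdiff : DifferentiableAt ℝ ρr z := by
    have h1 : DifferentiableAt ℝ (fun w => σ (u w)^2) z :=
      ((dσ.comp z du).pow 2)
    have h2 : DifferentiableAt ℝ (fun w => (‖wz u w‖)^2) z := by
      have : (fun w => (‖wz u w‖)^2)
          = fun w => (wz u w).re * (wz u w).re + (wz u w).im * (wz u w).im := by
        funext w; rw [Complex.sq_norm, Complex.normSq_apply]
      rw [this]
      exact ((Complex.reCLM.differentiableAt.comp z da).mul
          (Complex.reCLM.differentiableAt.comp z da)).add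
        ((Complex.imCLM.differentiableAt.comp z da).mul
          (Complex.imCLM.differentiableAt.comp z da))
    exact h1.mul h2
  rw [wzb_log hρdiff hρpos.ne']
  -- complexified conformal factor as a product
  have hPeq : (fun w => ((ρr w : ℝ) : ℂ))
      = fun w => (((σ (u w) : ℝ) : ℂ) * ((σ (u w) : ℝ) : ℂ))
          * (wz u w * (starRingEnd ℂ) (wz u w)) := by
    funext w
    rw [hρr]
    rw [Complex.mul_conj, ← Complex.sq_norm]
    push_cast
    ring
  rw [hPeq]
  rw [wzb_mul (dFu.fun_mul dFu) (da.fun_mul (dconj da)), wzb_mul dFu dFu, wzb_mul da (dconj da)]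
  have hcomp : wzb (fun w => ((σ (u w) : ℝ) : ℂ)) z
      = wz (fun x => ((σ x : ℝ) : ℂ)) (u z) * wzb u z
        + wzb (fun x => ((σ x : ℝ) : ℂ)) (u z) * (starRingEnd ℂ) (wz u z) :=
    wzb_comp dF du
  have hFr : wzb (fun x => ((σ x : ℝ) : ℂ)) (u z)
      = (starRingEnd ℂ) (wz (fun x => ((σ x : ℝ) : ℂ)) (u z)) := wzb_ofReal dσ
  have hconjA : wzb (fun w => (starRingEnd ℂ) (wz u w)) z
      = (starRingEnd ℂ) (wz (wz u) z) := wzb_conj da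
  have hba : wzb (wz u) z = -2 * ((wz (fun x => ((σ x : ℝ) : ℂ)) (u z)
      * (((σ (u z))⁻¹ : ℝ) : ℂ)) * (wz u z * wzb u z)) := harm_eq hσ hharm hz
  rw [hcomp, hFr, hconjA]
  have hρc : ((ρr z : ℝ) : ℂ) = (((σ (u z) : ℝ) : ℂ) * ((σ (u z) : ℝ) : ℂ))
      * (wz u z * (starRingEnd ℂ) (wz u z)) := by
    rw [hρr, Complex.mul_conj, ← Complex.sq_norm]; push_cast; ring
  rw [hρc]
  rw [show ((((σ (u z))⁻¹ : ℝ)) : ℂ) = (((σ (u z) : ℝ)) : ℂ)⁻¹ by push_cast; rfl] at hba ⊢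
  rw [hba]
  simp only [map_mul, map_inv₀, Complex.conj_ofReal]
  field_simp
  ring
end Main

section Curv
variable {Ω : Set ℂ} {u : ℂ → ℂ} {σ : ℂ → ℝ}

lemma curv_eq (hΩ : IsOpen Ω) (hσ : ∀ w, 0 < σ w)
    (hσsm : ContDiff ℝ (⊤ : ℕ∞) σ) (hdiff : ContDiffOn ℝ (⊤ : ℕ∞) u Ω)
    (horient : ∀ z ∈ Ω, ‖wzb u z‖ < ‖wz u z‖)
    (hharm : ∀ z ∈ Ω,
      wzb (fun w => wz u w) z
        + 2 * (wz (fun w => (σ w : ℂ)) (u z) / (σ (u z))) * wz u z * wzb u z = 0)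
    {z : ℂ} (hz : z ∈ Ω) :
    confCurv (fun w => σ (u w)^2 * (‖wz u w‖)^2) z
      = confCurv (fun w => σ w^2) (u z)
        * (((‖wz u z‖)^2 - (‖wzb u z‖)^2)
            / (‖wz u z‖)^2) := by
  have hΩn : Ω ∈ 𝓝 z := hΩ.mem_nhds hz
  set μ : ℂ → ℂ := fun x => wz (fun y => ((σ y : ℝ) : ℂ)) x * (((σ x)⁻¹ : ℝ) : ℂ) with hμdef
  -- nonvanishing
  have hAx : ∀ x ∈ Ω, wz u x ≠ 0 := by
    intro x hx h0
    have := horient x hx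
    rw [h0] at this
    simp only [norm_zero] at this
    exact (norm_nonneg _).not_gt this
  have hA : wz u z ≠ 0 := hAx z hz
  have hcA : (starRingEnd ℂ) (wz u z) ≠ 0 := by simpa using hA
  have hσ0 : ∀ x, σ x ≠ 0 := fun x => (hσ x).ne'
  -- differentiability suite
  have hu3 : ContDiffOn ℝ (3:ℕ) u Ω := hdiff.of_le (by exact WithTop.coe_le_coe.mpr le_top)
  have haS2 : ContDiffOn ℝ (2:ℕ) (wz u) Ω := contDiffOn_wz hΩ hu3
  have haS : ContDiffOn ℝ (1:ℕ) (wz u) Ω := haS2.of_le (by norm_num)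
  have hbS : ContDiffOn ℝ (1:ℕ) (wzb u) Ω := contDiffOn_wzb hΩ (hu3.of_le (by norm_num))
  have hcS : ContDiffOn ℝ (1:ℕ) (wz (wz u)) Ω := contDiffOn_wz hΩ haS2
  have du : DifferentiableAt ℝ u z :=
    ((hdiff.of_le (by simp) : ContDiffOn ℝ (1:ℕ) u Ω).contDiffAt hΩn).differentiableAt (by norm_num)
  have da : DifferentiableAt ℝ (wz u) z := (haS.contDiffAt hΩn).differentiableAt (by norm_num)
  have db : DifferentiableAt ℝ (wzb u) z := (hbS.contDiffAt hΩn).differentiableAt (by norm_num)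
  have dc : DifferentiableAt ℝ (wz (wz u)) z := (hcS.contDiffAt hΩn).differentiableAt (by norm_num)
  have hF2 : ContDiff ℝ (2:ℕ) (fun y => ((σ y : ℝ) : ℂ)) :=
    Complex.ofRealCLM.contDiff.comp (hσsm.of_le (by exact WithTop.coe_le_coe.mpr le_top))
  have hwzF : ContDiff ℝ (1:ℕ) (wz (fun y => ((σ y : ℝ) : ℂ))) := by
    rw [← contDiffOn_univ]
    exact contDiffOn_wz isOpen_univ hF2.contDiffOn
  have hinvsm : ContDiff ℝ (1:ℕ) (fun x => (((σ x)⁻¹ : ℝ) : ℂ)) :=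
    Complex.ofRealCLM.contDiff.comp ((hσsm.of_le (by simp)).inv hσ0)
  have hμsm : ContDiff ℝ (1:ℕ) μ := hwzF.mul hinvsm
  have dμ : DifferentiableAt ℝ μ (u z) := (hμsm.differentiable (by norm_num)).differentiableAt
  have dμu : DifferentiableAt ℝ (fun w => μ (u w)) z := dμ.comp z du
  have dconj : ∀ {h : ℂ → ℂ} {x : ℂ}, DifferentiableAt ℝ h x →
      DifferentiableAt ℝ (fun y => (starRingEnd ℂ) (h y)) x := fun hh =>
    Complex.conjCLE.differentiableAt.comp _ hh
  -- conformal factor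
  set ρr : ℂ → ℝ := fun w => σ (u w)^2 * (‖wz u w‖)^2 with hρr
  have hρpos : ∀ x ∈ Ω, 0 < ρr x := by
    intro x hx
    have h1 : 0 < ‖wz u x‖ := by
      simpa [norm_pos_iff] using hAx x hx
    exact mul_pos (pow_pos (hσ (u x)) 2) (pow_pos h1 2)
  have hρsm : ContDiffOn ℝ (2:ℕ) ρr Ω := by
    have h1 : ContDiffOn ℝ (2:ℕ) (fun w => σ (u w)^2) Ω :=
      (((hσsm.of_le (by exact WithTop.coe_le_coe.mpr le_top) : ContDiff ℝ (2:ℕ) σ).comp_contDiffOn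
        (hu3.of_le (by norm_num)))).pow 2
    have h2 : ContDiffOn ℝ (2:ℕ) (fun w => (‖wz u w‖)^2) Ω := by
      have he : (fun w => (‖wz u w‖)^2)
          = fun w => (wz u w).re * (wz u w).re + (wz u w).im * (wz u w).im := by
        funext w; rw [Complex.sq_norm, Complex.normSq_apply]
      rw [he]
      exact ((Complex.reCLM.contDiff.comp_contDiffOn haS2).mul
          (Complex.reCLM.contDiff.comp_contDiffOn haS2)).add
        ((Complex.imCLM.contDiff.comp_contDiffOn haS2).mul
          (Complex.imCLM.contDiff.comp_contDiffOn haS2))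
    exact h1.mul h2
  -- the Laplacian of log ρ
  have hlogC2 : ContDiffAt ℝ 2 (fun w => Real.log (ρr w)) z :=
    (hρsm.contDiffAt hΩn).log (hρpos z hz).ne'
  have hL : lap (fun w => Real.log (ρr w)) z
      = 4 * (wzb (wz (fun w => ((Real.log (ρr w) : ℝ) : ℂ))) z).re := lap_eq hlogC2
  -- symmetry
  have hLC2 : ContDiffAt ℝ 2 (fun w => ((Real.log (ρr w) : ℝ) : ℂ)) z :=
    Complex.ofRealCLM.contDiff.contDiffAt.comp z hlogC2
  have hsymL : wzb (wz (fun w => ((Real.log (ρr w) : ℝ) : ℂ))) z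
      = wz (wzb (fun w => ((Real.log (ρr w) : ℝ) : ℂ))) z := wzb_wz_comm hLC2
  -- eventual formula for wzb log ρ
  have hev : wzb (fun w => ((Real.log (ρr w) : ℝ) : ℂ))
      =ᶠ[𝓝 z] fun w => 2 * ((starRingEnd ℂ) (μ (u w)) * (starRingEnd ℂ) (wz u w))
        + (starRingEnd ℂ) (wz (wz u) w) * ((starRingEnd ℂ) (wz u w))⁻¹ := by
    filter_upwards [hΩn] with w hw
    exact wzbL_eq hΩ hσ hσsm hdiff horient hharm hw
  -- harmonic equation as an eventual identity
  have hevb : wzb (wz u) =ᶠ[𝓝 z] fun w => -2 * (μ (u w) * (wz u w * wzb u w)) := by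
    filter_upwards [hΩn] with w hw
    exact harm_eq hσ hharm hw
  -- pointwise values
  have hu2at : ContDiffAt ℝ 2 u z := (hu3.of_le (by norm_num)).contDiffAt hΩn
  have hbz : wzb (wz u) z = -2 * (μ (u z) * (wz u z * wzb u z)) := harm_eq hσ hharm hz
  have e4 : wz (wzb u) z = wzb (wz u) z := (wzb_wz_comm hu2at).symm
  -- derivative pieces
  have dX : DifferentiableAt ℝ (fun w => (starRingEnd ℂ) (μ (u w))) z := dconj dμu
  have dY : DifferentiableAt ℝ (fun w => (starRingEnd ℂ) (wz u w)) z := dconj da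
  have dZ : DifferentiableAt ℝ (fun w => (starRingEnd ℂ) (wz (wz u) w)) z := dconj dc
  have dW : DifferentiableAt ℝ (fun w => ((starRingEnd ℂ) (wz u w))⁻¹) z :=
    diff_inv (dconj da) hcA
  have hwzY : wz (fun w => (starRingEnd ℂ) (wz u w)) z
      = (starRingEnd ℂ) (wzb (wz u) z) := wz_conj da
  have hwzX : wz (fun w => (starRingEnd ℂ) (μ (u w))) z
      = (starRingEnd ℂ) (wzb (fun w => μ (u w)) z) := wz_conj dμu
  have hcompμb : wzb (fun w => μ (u w)) z
      = wz μ (u z) * wzb u z + wzb μ (u z) * (starRingEnd ℂ) (wz u z) := wzb_comp dμ du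
  have hcompμ : wz (fun w => μ (u w)) z
      = wz μ (u z) * wz u z + wzb μ (u z) * (starRingEnd ℂ) (wzb u z) := wz_comp dμ du
  have hwzZ : wz (fun w => (starRingEnd ℂ) (wz (wz u) w)) z
      = (starRingEnd ℂ) (wzb (wz (wz u)) z) := wz_conj dc
  have hsym2 : wzb (wz (wz u)) z = wz (wzb (wz u)) z := wzb_wz_comm (haS2.contDiffAt hΩn)
  have hwzb3 : wz (wzb (wz u)) z
      = wz (fun w => -2 * (μ (u w) * (wz u w * wzb u w))) z := wz_congr hevb
  have d1 : DifferentiableAt ℝ (fun w => μ (u w) * (wz u w * wzb u w)) z :=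
    dμu.mul (da.mul db)
  have e1 : wz (fun w => -2 * (μ (u w) * (wz u w * wzb u w))) z
      = -2 * wz (fun w => μ (u w) * (wz u w * wzb u w)) z := wz_const_mul (-2) d1
  have e2 : wz (fun w => μ (u w) * (wz u w * wzb u w)) z
      = μ (u z) * wz (fun w => wz u w * wzb u w) z
        + (wz u z * wzb u z) * wz (fun w => μ (u w)) z := wz_mul dμu (da.mul db)
  have e3 : wz (fun w => wz u w * wzb u w) z
      = wz u z * wz (wzb u) z + wzb u z * wz (wz u) z := wz_mul da db
  have hwzW : wz (fun w => ((starRingEnd ℂ) (wz u w))⁻¹) z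
      = - wz (fun w => (starRingEnd ℂ) (wz u w)) z / ((starRingEnd ℂ) (wz u z))^2 :=
    wz_inv (dconj da) hcA
  -- assemble the wz of the eventual formula
  have hG1 : wz (fun w => 2 * ((starRingEnd ℂ) (μ (u w)) * (starRingEnd ℂ) (wz u w))
        + (starRingEnd ℂ) (wz (wz u) w) * ((starRingEnd ℂ) (wz u w))⁻¹) z
      = wz (fun w => 2 * ((starRingEnd ℂ) (μ (u w)) * (starRingEnd ℂ) (wz u w))) z
        + wz (fun w => (starRingEnd ℂ) (wz (wz u) w) * ((starRingEnd ℂ) (wz u w))⁻¹) z :=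
    wz_add ((dX.mul dY).const_mul 2) (dZ.mul dW)
  have hG2 : wz (fun w => 2 * ((starRingEnd ℂ) (μ (u w)) * (starRingEnd ℂ) (wz u w))) z
      = 2 * wz (fun w => (starRingEnd ℂ) (μ (u w)) * (starRingEnd ℂ) (wz u w)) z :=
    wz_const_mul 2 (dX.mul dY)
  have hG3 : wz (fun w => (starRingEnd ℂ) (μ (u w)) * (starRingEnd ℂ) (wz u w)) z
      = (starRingEnd ℂ) (μ (u z)) * wz (fun w => (starRingEnd ℂ) (wz u w)) z
        + (starRingEnd ℂ) (wz u z) * wz (fun w => (starRingEnd ℂ) (μ (u w))) z :=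
    wz_mul dX dY
  have hG4 : wz (fun w => (starRingEnd ℂ) (wz (wz u) w) * ((starRingEnd ℂ) (wz u w))⁻¹) z
      = (starRingEnd ℂ) (wz (wz u) z) * wz (fun w => ((starRingEnd ℂ) (wz u w))⁻¹) z
        + ((starRingEnd ℂ) (wz u z))⁻¹ * wz (fun w => (starRingEnd ℂ) (wz (wz u) w)) z :=
    wz_mul dZ dW
  have hwG : wz (fun w => 2 * ((starRingEnd ℂ) (μ (u w)) * (starRingEnd ℂ) (wz u w))
        + (starRingEnd ℂ) (wz (wz u) w) * ((starRingEnd ℂ) (wz u w))⁻¹) z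
      = 2 * (starRingEnd ℂ) (wzb μ (u z))
          * (wz u z * (starRingEnd ℂ) (wz u z) - wzb u z * (starRingEnd ℂ) (wzb u z)) := by
    rw [hG1, hG2, hG3, hG4, hwzX, hwzY, hwzZ, hwzW, hsym2, hwzb3, e1, e2, e3, e4,
      hcompμ, hcompμb, hbz, hwzY, hbz]
    simp only [map_mul, map_add, map_neg, map_ofNat, Complex.conj_conj, map_sub]
    field_simp
    ring
  -- put everything together
  have hwzbL : wzb (wz (fun w => ((Real.log (ρr w) : ℝ) : ℂ))) z
      = 2 * (starRingEnd ℂ) (wzb μ (u z))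
          * (wz u z * (starRingEnd ℂ) (wz u z) - wzb u z * (starRingEnd ℂ) (wzb u z)) := by
    rw [hsymL, wz_congr hev, hwG]
  have hre : (2 * (starRingEnd ℂ) (wzb μ (u z))
      * (wz u z * (starRingEnd ℂ) (wz u z) - wzb u z * (starRingEnd ℂ) (wzb u z))).re
      = 2 * (wzb μ (u z)).re
        * ((‖wz u z‖)^2 - (‖wzb u z‖)^2) := by
    have h1 : wz u z * (starRingEnd ℂ) (wz u z) = (((‖wz u z‖)^2 : ℝ) : ℂ) := by
      rw [Complex.mul_conj, Complex.sq_norm]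
    have h2 : wzb u z * (starRingEnd ℂ) (wzb u z) = (((‖wzb u z‖)^2 : ℝ) : ℂ) := by
      rw [Complex.mul_conj, Complex.sq_norm]
    rw [h1, h2, ← Complex.ofReal_sub]
    simp [Complex.mul_re, Complex.mul_im, ← Complex.ofReal_pow]
  have hK2 := K2_eq σ hσ (hσsm.of_le (by exact WithTop.coe_le_coe.mpr le_top)) (u z)
  rw [← hμdef] at hK2
  show -(1 / (2 * ρr z)) * lap (fun w => Real.log (ρr w)) z = _
  rw [hL, hwzbL, hre, hK2]
  have h1 : ρr z = σ (u z)^2 * (‖wz u z‖)^2 := rfl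
  rw [h1]
  have h2 : ‖wz u z‖ ≠ 0 := by simpa using hA
  have h3 : σ (u z) ≠ 0 := hσ0 (u z)
  field_simp
end Curv

end WirtingerLib

/-- For an orientation-preserving harmonic diffeomorphism `w = u(z)` with
`g₂ = σ²(w)|dw|²` and `ĝ = σ²(u)|u_z|²|dz|²`, the curvature of `ĝ` satisfies
`K_ĝ = K_{g₂}(φ)·Ĵ(φ)` with `Ĵ(φ) = (|u_z|²-|u_z̄|²)/|u_z|² ∈ [0,1]`, and
`∫_A K_ĝ⁻ dσ_ĝ = ∫_{φ(A)} K_{g₂}⁻ dσ_{g₂}` for measurable `A`. -/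
theorem stmt5 (Ω : Set ℂ) (hΩ : IsOpen Ω) (u : ℂ → ℂ) (σ : ℂ → ℝ)
    (hσ : ∀ w, 0 < σ w)
    (hσsm : ContDiff ℝ (⊤ : ℕ∞) σ)
    (hdiff : ContDiffOn ℝ (⊤ : ℕ∞) u Ω)
    (hinj : Set.InjOn u Ω)
    (horient : ∀ z ∈ Ω, ‖wzb u z‖ < ‖wz u z‖)
    (hharm : ∀ z ∈ Ω,
      wzb (fun w => wz u w) z
        + 2 * (wz (fun w => (σ w : ℂ)) (u z) / (σ (u z))) * wz u z * wzb u z = 0) :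
    ∀ ρ : ℂ → ℝ, (∀ z, ρ z = (σ (u z)) ^ 2 * (‖wz u z‖) ^ 2) →
    ∀ Jhat : ℂ → ℝ,
      (∀ z, Jhat z = ((‖wz u z‖) ^ 2 - (‖wzb u z‖) ^ 2)
          / (‖wz u z‖) ^ 2) →
    (∀ z ∈ Ω,
        confCurv ρ z = confCurv (fun w => (σ w) ^ 2) (u z) * Jhat z
          ∧ 0 ≤ Jhat z ∧ Jhat z ≤ 1) ∧
    (∀ A : Set ℂ, A ⊆ Ω → MeasurableSet A →
      (∫ z in A, max 0 (-(confCurv ρ z)) * ρ z)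
        = ∫ w in u '' A, max 0 (-(confCurv (fun w' => (σ w') ^ 2) w)) * (σ w) ^ 2) := by
  intro ρ hρ Jhat hJ
  have hρe : ρ = fun z => (σ (u z)) ^ 2 * (‖wz u z‖) ^ 2 := funext hρ
  subst hρe
  have hJe : Jhat = fun z => ((‖wz u z‖) ^ 2 - (‖wzb u z‖) ^ 2)
      / (‖wz u z‖) ^ 2 := funext hJ
  subst hJe
  -- basic nonvanishing
  have hAx : ∀ x ∈ Ω, wz u x ≠ 0 := by
    intro x hx h0
    have := horient x hx
    rw [h0] at this
    simp only [norm_zero] at this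
    exact (norm_nonneg _).not_gt this
  have habs : ∀ x ∈ Ω, 0 < ‖wz u x‖ := by
    intro x hx
    simpa [norm_pos_iff] using hAx x hx
  have hmain : ∀ z ∈ Ω,
      confCurv (fun z => (σ (u z)) ^ 2 * (‖wz u z‖) ^ 2) z
        = confCurv (fun w => (σ w) ^ 2) (u z)
          * (((‖wz u z‖) ^ 2 - (‖wzb u z‖) ^ 2)
              / (‖wz u z‖) ^ 2) :=
    fun z hz => curv_eq hΩ hσ hσsm hdiff horient hharm hz
  have hJnn : ∀ z ∈ Ω, 0 ≤ ((‖wz u z‖) ^ 2 - (‖wzb u z‖) ^ 2)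
      / (‖wz u z‖) ^ 2 := by
    intro z hz
    apply div_nonneg _ (sq_nonneg _)
    have := (horient z hz).le
    nlinarith [norm_nonneg (wzb u z), norm_nonneg (wz u z)]
  constructor
  · intro z hz
    refine ⟨hmain z hz, hJnn z hz, ?_⟩
    rw [div_le_one (pow_pos (habs z hz) 2)]
    nlinarith [norm_nonneg (wzb u z), sq_nonneg (‖wzb u z‖)]
  · intro A hA hAm
    -- area formula
    have hf' : ∀ x ∈ A, HasFDerivWithinAt u (fderiv ℝ u x) A x := by
      intro x hx
      have du : DifferentiableAt ℝ u x :=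
        ((hdiff.of_le (by simp) : ContDiffOn ℝ (1:ℕ) u Ω).contDiffAt
          (hΩ.mem_nhds (hA hx))).differentiableAt (by norm_num)
      exact du.hasFDerivAt.hasFDerivWithinAt
    have key := integral_image_eq_integral_abs_det_fderiv_smul volume hAm hf'
      (hinj.mono hA)
      (fun w => max 0 (-(confCurv (fun w' => (σ w') ^ 2) w)) * (σ w) ^ 2)
    rw [key]
    apply setIntegral_congr_fun hAm
    intro z hz
    have hzΩ : z ∈ Ω := hA hz
    have hdet : (fderiv ℝ u z).det
        = (‖wz u z‖) ^ 2 - (‖wzb u z‖) ^ 2 := det_fderiv_eq u z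
    have hdetpos : 0 < (fderiv ℝ u z).det := by
      rw [hdet]
      have := horient z hzΩ
      nlinarith [norm_nonneg (wzb u z), norm_nonneg (wz u z)]
    have habsz := habs z hzΩ
    beta_reduce
    rw [hmain z hzΩ]
    rw [abs_of_pos hdetpos, hdet]
    set K := confCurv (fun w' => (σ w') ^ 2) (u z) with hK
    set p := (‖wz u z‖) ^ 2 with hp
    set q := (‖wzb u z‖) ^ 2 with hq
    have hpq : 0 ≤ (p - q) / p := hJnn z hzΩ
    have hmax : max 0 (-(K * ((p - q) / p))) = max 0 (-K) * ((p - q) / p) := by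
      rw [max_mul_of_nonneg _ _ hpq]
      ring_nf
    rw [smul_eq_mul, hmax]
    have hp0 : p ≠ 0 := by positivity
    field_simp
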